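/- arXiv:1512.01152 — 2 statements merged into one kernel-verified Lean document; each statement's English description precedes it below -/
import Mathlib

section
/- Let $p$ be a prime and let $m_1, m_2, n_1, n_2$ be integers none of which is divisible by $p$. Then the GL(3) long Weyl element Kloosterman sum satisfies $S(m_1, m_2, n_1, n_2; p, p) = p + 1$. -/
open Finset

/-- `e(x) = e^{2πix}`. -/
noncomputable def efn (x : ℝ) : ℂ := Complex.exp (2 * Real.pi * Complex.I * x)

/-- Classical Kloosterman sum `S(a,b;c) = ∑_{x mod c, (x,c)=1} e((ax + b x̄)/c)`. -/
noncomputable def Kl (a b : ℤ) (c : ℕ) : ℂ :=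
  ∑ x ∈ Finset.range c, if Nat.gcd x c = 1 then
    efn (((a * x + b * (((x : ZMod c)⁻¹).val : ℤ) : ℤ) : ℝ) / c) else 0

/-- A canonical choice of `Y` with `Y·B + Z·C ≡ 1 (mod D)` when `gcd(B,C,D)=1`. -/
def Ycoef (B C D : ℕ) : ℤ := Nat.gcdA B (Nat.gcd C D)

/-- A canonical choice of `Z` with `Y·B + Z·C ≡ 1 (mod D)` when `gcd(B,C,D)=1`. -/
def Zcoef (B C D : ℕ) : ℤ := Nat.gcdB B (Nat.gcd C D) * Nat.gcdA C D

/-- The GL(3) long Weyl element Kloosterman sum `S(m₁,m₂,n₁,n₂;D₁,D₂)`. -/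
noncomputable def SGL3 (m1 m2 n1 n2 : ℤ) (D1 D2 : ℕ) : ℂ :=
  ∑ B1 ∈ Finset.range D1, ∑ C1 ∈ Finset.range D1,
  ∑ B2 ∈ Finset.range D2, ∑ C2 ∈ Finset.range D2,
    if Nat.gcd B1 (Nat.gcd C1 D1) = 1 ∧ Nat.gcd B2 (Nat.gcd C2 D2) = 1 ∧
       (D1 * D2) ∣ (D1 * C2 + B1 * B2 + D2 * C1) then
      efn ((((m1 * B1 + n1 * (Ycoef B1 C1 D1 * D2 - Zcoef B1 C1 D1 * B2)) : ℤ) : ℝ) / D1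
        + (((m2 * B2 + n2 * (Ycoef B2 C2 D2 * D1 - Zcoef B2 C2 D2 * B1)) : ℤ) : ℝ) / D2)
    else 0

/- ### Auxiliary lemmas -/

lemma SGL3aux.efn_add (x y : ℝ) : efn (x + y) = efn x * efn y := by
  simp [efn, mul_add, Complex.exp_add]

lemma SGL3aux.efn_int (n : ℤ) : efn n = 1 := by
  unfold efn
  rw [show ((2:ℂ) * Real.pi * Complex.I * (n:ℝ)) = (n:ℤ) * (2 * Real.pi * Complex.I) by push_cast; ring]
  exact Complex.exp_int_mul_two_pi_mul_I n

lemma SGL3aux.efn_zero : efn 0 = 1 := by simpa using SGL3aux.efn_int 0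

lemma SGL3aux.efn_pow (x : ℝ) (n : ℕ) : efn x ^ n = efn (n * x) := by
  unfold efn
  rw [← Complex.exp_nat_mul]
  push_cast
  ring_nf

lemma SGL3aux.efn_shift (p : ℕ) (hp : 0 < p) (a k : ℤ) :
    efn (((a + p * k : ℤ) : ℝ) / p) = efn ((a : ℝ) / p) := by
  have hp0 : (p:ℝ) ≠ 0 := by positivity
  have h : ((a + p * k : ℤ) : ℝ) / p = (a:ℝ)/p + ((k:ℤ):ℝ) := by
    push_cast; field_simp
  rw [h, SGL3aux.efn_add, SGL3aux.efn_int, mul_one]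

lemma SGL3aux.sum_range_efn (p : ℕ) (hp : 0 < p) (t : ℤ) :
    ∑ x ∈ range p, efn (((t * x : ℤ) : ℝ) / p) = if (p:ℤ) ∣ t then (p:ℂ) else 0 := by
  have hp0 : (p:ℝ) ≠ 0 := by positivity
  by_cases h : (p:ℤ) ∣ t
  · obtain ⟨s, rfl⟩ := h
    rw [if_pos (dvd_mul_right _ _)]
    have h1 : ∀ x ∈ range p, efn ((((p:ℤ) * s * x : ℤ) : ℝ) / p) = 1 := by
      intro x _
      have : (((p:ℤ) * s * x : ℤ) : ℝ) / p = ((s * x : ℤ) : ℝ) := by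
        push_cast; field_simp
      rw [this, SGL3aux.efn_int]
    rw [Finset.sum_congr rfl h1]
    simp
  · rw [if_neg h]
    have hterm : ∀ x ∈ range p, efn (((t * x : ℤ) : ℝ) / p) = efn ((t:ℝ)/p) ^ x := by
      intro x _
      rw [SGL3aux.efn_pow]
      congr 1
      push_cast; ring
    rw [Finset.sum_congr rfl hterm]
    have hz : efn ((t:ℝ)/p) ≠ 1 := by
      intro hz1
      apply h
      unfold efn at hz1
      rw [Complex.exp_eq_one_iff] at hz1
      obtain ⟨n, hn⟩ := hz1
      have hpi : (Real.pi : ℂ) ≠ 0 := by simpa using Real.pi_ne_zero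
      have h2 : (2:ℂ) * Real.pi * Complex.I ≠ 0 := by
        simp [Complex.I_ne_zero, hpi]
      have hc : (((t:ℝ)/p : ℝ) : ℂ) = ((n:ℝ) : ℂ) := by
        apply mul_left_cancel₀ h2
        rw [hn]; push_cast; ring
      have hr : (t:ℝ)/p = (n:ℝ) := by exact_mod_cast hc
      have hre : (t:ℝ) = ((n * p : ℤ) : ℝ) := by
        push_cast
        field_simp at hr
        linarith
      have ht : t = n * p := by exact_mod_cast hre
      exact ⟨n, by linarith⟩
    rw [geom_sum_eq hz p]
    have hpow : efn ((t:ℝ)/p) ^ p = 1 := by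
      rw [SGL3aux.efn_pow]
      have : (p:ℝ) * ((t:ℝ)/p) = ((t:ℤ):ℝ) := by field_simp
      rw [this, SGL3aux.efn_int]
    rw [hpow]
    simp

lemma SGL3aux.YZ_bezout (B C D : ℕ) (h : Nat.gcd B (Nat.gcd C D) = 1) :
    (D:ℤ) ∣ (Ycoef B C D * B + Zcoef B C D * C - 1) := by
  set g := Nat.gcd C D with hg
  have e1 : (1:ℤ) = B * Nat.gcdA B g + g * Nat.gcdB B g := by
    rw [← Nat.gcd_eq_gcd_ab]; exact_mod_cast h.symm
  have e2 : (g:ℤ) = C * Nat.gcdA C D + D * Nat.gcdB C D := Nat.gcd_eq_gcd_ab C D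
  refine ⟨-(Nat.gcdB B g * Nat.gcdB C D), ?_⟩
  unfold Ycoef Zcoef
  rw [← hg]
  linear_combination (-1) * e1 - (Nat.gcdB B g) * e2

lemma SGL3aux.gcd_prime_lt {p : ℕ} (hp : p.Prime) {c : ℕ} (hc : c < p) :
    Nat.gcd c p = 1 ↔ c ≠ 0 := by
  constructor
  · rintro h rfl
    simp [Nat.gcd_zero_left] at h
    exact hp.one_lt.ne' h
  · intro hc0
    have hnd : ¬ p ∣ c := fun hd => hc0 (Nat.eq_zero_of_dvd_of_lt hd hc)
    exact Nat.coprime_comm.mp (hp.coprime_iff_not_dvd.mpr hnd)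

lemma SGL3aux.gcd_triple_one {p b : ℕ} (hb : Nat.gcd b p = 1) (C : ℕ) :
    Nat.gcd b (Nat.gcd C p) = 1 := by
  have h : Nat.gcd b (Nat.gcd C p) ∣ Nat.gcd b p :=
    Nat.dvd_gcd (Nat.gcd_dvd_left _ _) ((Nat.gcd_dvd_right _ _).trans (Nat.gcd_dvd_right _ _))
  rw [hb] at h
  exact Nat.dvd_one.mp h

lemma SGL3aux.Zcoef_mul (p C : ℕ) (h : Nat.gcd C p = 1) :
    ((Zcoef 0 C p : ZMod p)) * (C : ZMod p) = 1 := by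
  have h0 : Nat.gcd 0 (Nat.gcd C p) = 1 := by rwa [Nat.gcd_zero_left]
  have hb := SGL3aux.YZ_bezout 0 C p h0
  have h2 : ((Ycoef 0 C p * 0 + Zcoef 0 C p * C - 1 : ℤ) : ZMod p) = 0 :=
    (ZMod.intCast_zmod_eq_zero_iff_dvd _ _).mpr hb
  push_cast at h2
  linear_combination h2

lemma SGL3aux.collapseC2 {p : ℕ} (C1 : ℕ) (h1 : 0 < C1) (h2 : C1 < p) (f : ℕ → ℂ) :
    ∑ C2 ∈ range p, (if p ∣ C1 + C2 then f C2 else 0) = f (p - C1) := by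
  have hmem : p - C1 ∈ range p := by rw [mem_range]; omega
  rw [Finset.sum_eq_single_of_mem (p - C1) hmem]
  · rw [if_pos (show p ∣ C1 + (p - C1) by rw [show C1 + (p - C1) = p by omega])]
  · intro C2 hC2 hne
    rw [mem_range] at hC2
    rw [if_neg]
    rintro ⟨k, hk⟩
    have hk2 : k < 2 := by
      have : p * k < p * 2 := by omega
      exact Nat.lt_of_mul_lt_mul_left this
    have hk1 : k ≠ 0 := by rintro rfl; omega
    interval_cases k <;> omega

lemma SGL3aux.term_eval (p : ℕ) (hp : 0 < p) (m1 m2 n1 n2 : ℤ) (B1 C1 B2 C2 : ℕ) :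
    efn ((((m1 * B1 + n1 * (Ycoef B1 C1 p * p - Zcoef B1 C1 p * B2)) : ℤ) : ℝ) / p
        + (((m2 * B2 + n2 * (Ycoef B2 C2 p * p - Zcoef B2 C2 p * B1)) : ℤ) : ℝ) / p)
    = efn ((((m1 * B1 + m2 * B2 - n1 * Zcoef B1 C1 p * B2 - n2 * Zcoef B2 C2 p * B1) : ℤ) : ℝ) / p) := by
  have hp0 : (p:ℝ) ≠ 0 := by positivity
  have harg : (((m1 * B1 + n1 * (Ycoef B1 C1 p * p - Zcoef B1 C1 p * B2)) : ℤ) : ℝ) / p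
        + (((m2 * B2 + n2 * (Ycoef B2 C2 p * p - Zcoef B2 C2 p * B1)) : ℤ) : ℝ) / p
      = (((m1 * B1 + m2 * B2 - n1 * Zcoef B1 C1 p * B2 - n2 * Zcoef B2 C2 p * B1
          + p * (n1 * Ycoef B1 C1 p + n2 * Ycoef B2 C2 p)) : ℤ) : ℝ) / p := by
    push_cast
    field_simp
    ring
  rw [harg, SGL3aux.efn_shift p hp]

lemma SGL3aux.dvd_crit {p : ℕ} (hp : p.Prime) (m n : ℤ)
    (hm : ¬ (p:ℤ) ∣ m) (C : ℕ) (hC0 : C ≠ 0) (hC : C < p) :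
    (p:ℤ) ∣ (m - n * Zcoef 0 C p) ↔ (C : ZMod p) = (n : ZMod p) * (m : ZMod p)⁻¹ := by
  haveI : Fact p.Prime := ⟨hp⟩
  have hZC : ((Zcoef 0 C p : ZMod p)) * (C : ZMod p) = 1 :=
    SGL3aux.Zcoef_mul p C ((SGL3aux.gcd_prime_lt hp hC).mpr hC0)
  have hm0 : (m : ZMod p) ≠ 0 := by
    rwa [Ne, ZMod.intCast_zmod_eq_zero_iff_dvd]
  have hinv : (m : ZMod p) * (m : ZMod p)⁻¹ = 1 := mul_inv_cancel₀ hm0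
  rw [show ((p:ℤ) ∣ (m - n * Zcoef 0 C p)) ↔ ((m - n * Zcoef 0 C p : ℤ) : ZMod p) = 0 from
    (ZMod.intCast_zmod_eq_zero_iff_dvd _ _).symm]
  push_cast
  constructor
  · intro h
    linear_combination ((C:ZMod p) * (m:ZMod p)⁻¹) * h
      + ((n:ZMod p) * (m:ZMod p)⁻¹) * hZC - (C:ZMod p) * hinv
  · intro h
    linear_combination ((m:ZMod p) * (Zcoef 0 C p : ZMod p)) * h
      + ((Zcoef 0 C p : ZMod p) * (n:ZMod p)) * hinv - (m:ZMod p) * hZC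

lemma SGL3aux.count_sum {p : ℕ} [NeZero p] (u : ZMod p) (hu : u ≠ 0) (P : ℕ → Prop)
    [DecidablePred P] (hP : ∀ C ∈ (range p).erase 0, (P C ↔ (C : ZMod p) = u)) :
    ∑ C ∈ (range p).erase 0, (if P C then (p:ℂ) else 0) = p := by
  have hval : (u.val : ZMod p) = u := ZMod.natCast_rightInverse u
  have hmem : u.val ∈ (range p).erase 0 := by
    rw [mem_erase, mem_range]
    exact ⟨by simpa [ZMod.val_eq_zero] using hu, ZMod.val_lt u⟩
  rw [Finset.sum_eq_single_of_mem u.val hmem]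
  · rw [if_pos ((hP _ hmem).mpr hval)]
  · intro C hC hne
    rw [if_neg]
    intro hPC
    have h := (hP _ hC).mp hPC
    apply hne
    rw [mem_erase, mem_range] at hC
    rw [← h, ZMod.val_cast_of_lt hC.2]

/-- The canonical (simplified) summand. -/
noncomputable def SGL3aux.Fcan (m1 m2 n1 n2 : ℤ) (p B1 C1 B2 C2 : ℕ) : ℂ :=
  if Nat.gcd B1 (Nat.gcd C1 p) = 1 ∧ Nat.gcd B2 (Nat.gcd C2 p) = 1 ∧
     (B1 = 0 ∨ B2 = 0) ∧ p ∣ C1 + C2 then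
    efn ((((m1 * B1 + m2 * B2 - n1 * Zcoef B1 C1 p * B2 - n2 * Zcoef B2 C2 p * B1) : ℤ) : ℝ) / p)
  else 0

lemma SGL3aux.cond_iff {p : ℕ} (hp : p.Prime) {B1 B2 : ℕ} (hB1 : B1 < p) (hB2 : B2 < p)
    (C1 C2 : ℕ) :
    (p * p) ∣ (p * C2 + B1 * B2 + p * C1) ↔ ((B1 = 0 ∨ B2 = 0) ∧ p ∣ C1 + C2) := by
  constructor
  · intro hd
    have hpd : p ∣ p * C2 + B1 * B2 + p * C1 := dvd_trans (dvd_mul_right p p) hd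
    have h' : p ∣ p * (C2 + C1) + B1 * B2 := by
      rwa [show p * C2 + B1 * B2 + p * C1 = p * (C2 + C1) + B1 * B2 by ring] at hpd
    have hdp : p ∣ B1 * B2 := (Nat.dvd_add_right (dvd_mul_right _ _)).mp h'
    have hB : B1 = 0 ∨ B2 = 0 := by
      rcases (Nat.Prime.dvd_mul hp).mp hdp with h | h
      · exact Or.inl (Nat.eq_zero_of_dvd_of_lt h hB1)
      · exact Or.inr (Nat.eq_zero_of_dvd_of_lt h hB2)
    refine ⟨hB, ?_⟩
    have hBB : B1 * B2 = 0 := by rcases hB with h | h <;> simp [h]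
    rw [hBB, show p * C2 + 0 + p * C1 = p * (C1 + C2) by ring] at hd
    have := (mul_dvd_mul_iff_left (show p ≠ 0 from hp.pos.ne')).mp hd
    exact this
  · rintro ⟨hB, ⟨k, hk⟩⟩
    have hBB : B1 * B2 = 0 := by rcases hB with h | h <;> simp [h]
    refine ⟨k, ?_⟩
    calc p * C2 + B1 * B2 + p * C1 = p * (C1 + C2) := by rw [hBB]; ring
      _ = p * (p * k) := by rw [hk]
      _ = p * p * k := by ring


lemma SGL3aux.split4 {p : ℕ} (h0 : (0:ℕ) ∈ range p) (f : ℕ → ℕ → ℂ) :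
    ∑ x ∈ range p, ∑ y ∈ range p, f x y
      = f 0 0 + (∑ y ∈ (range p).erase 0, f 0 y) + (∑ x ∈ (range p).erase 0, f x 0)
        + ∑ x ∈ (range p).erase 0, ∑ y ∈ (range p).erase 0, f x y := by
  rw [← Finset.add_sum_erase _ (fun x => ∑ y ∈ range p, f x y) h0]
  rw [← Finset.add_sum_erase _ (f 0) h0]
  rw [Finset.sum_congr rfl (fun x (_ : x ∈ (range p).erase 0) =>
    (Finset.add_sum_erase _ (f x) h0).symm)]
  rw [Finset.sum_add_distrib]
  ring

lemma SGL3aux.T00 {p : ℕ} (hp : p.Prime) (m1 m2 n1 n2 : ℤ) :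
    ∑ C1 ∈ range p, ∑ C2 ∈ range p, SGL3aux.Fcan m1 m2 n1 n2 p 0 C1 0 C2 = (p:ℂ) - 1 := by
  have hp0 := hp.pos
  have h0mem : (0:ℕ) ∈ range p := mem_range.mpr hp0
  rw [← Finset.add_sum_erase _ _ h0mem]
  have hz : ∑ C2 ∈ range p, SGL3aux.Fcan m1 m2 n1 n2 p 0 0 0 C2 = 0 := by
    apply Finset.sum_eq_zero
    intro C2 _
    unfold SGL3aux.Fcan
    rw [if_neg]
    rintro ⟨hA, -⟩
    rw [Nat.gcd_zero_left, Nat.gcd_zero_left] at hA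
    exact hp.one_lt.ne' hA
  have hrest : ∑ C1 ∈ (range p).erase 0,
      (∑ C2 ∈ range p, SGL3aux.Fcan m1 m2 n1 n2 p 0 C1 0 C2)
      = ∑ C1 ∈ (range p).erase 0, (1:ℂ) := by
    refine Finset.sum_congr rfl fun C1 hC1 => ?_
    rw [mem_erase, mem_range] at hC1
    have hg1 : Nat.gcd C1 p = 1 := (SGL3aux.gcd_prime_lt hp hC1.2).mpr hC1.1
    have hpt : ∀ C2 ∈ range p, SGL3aux.Fcan m1 m2 n1 n2 p 0 C1 0 C2
        = (if p ∣ C1 + C2 then (if Nat.gcd C2 p = 1 then (1:ℂ) else 0) else 0) := by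
      intro C2 _
      unfold SGL3aux.Fcan
      by_cases hg2 : Nat.gcd C2 p = 1 <;> by_cases hd : p ∣ C1 + C2 <;>
        simp [Nat.gcd_zero_left, hg1, hg2, hd, SGL3aux.efn_zero]
    rw [Finset.sum_congr rfl hpt,
      SGL3aux.collapseC2 C1 (Nat.pos_of_ne_zero hC1.1) hC1.2]
    rw [if_pos ((SGL3aux.gcd_prime_lt hp (by omega)).mpr (by omega))]
  rw [hz, hrest, Finset.sum_const, card_erase_of_mem h0mem, card_range]
  have : ((p - 1 : ℕ) : ℂ) = (p:ℂ) - 1 := by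
    push_cast [Nat.cast_sub hp0]
    ring
  simp [this]

lemma SGL3aux.Tbb {p : ℕ} (m1 m2 n1 n2 : ℤ) {B1 B2 : ℕ} (h1 : B1 ≠ 0) (h2 : B2 ≠ 0) :
    ∑ C1 ∈ range p, ∑ C2 ∈ range p, SGL3aux.Fcan m1 m2 n1 n2 p B1 C1 B2 C2 = 0 := by
  apply Finset.sum_eq_zero; intro C1 _
  apply Finset.sum_eq_zero; intro C2 _
  unfold SGL3aux.Fcan
  rw [if_neg]
  rintro ⟨-, -, hB, -⟩
  rcases hB with h | h
  · exact h1 h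
  · exact h2 h

lemma SGL3aux.Tb0 {p : ℕ} (hp : p.Prime) (m1 m2 n1 n2 : ℤ) {b : ℕ}
    (hb0 : b ≠ 0) (hbp : b < p) :
    ∑ C1 ∈ range p, ∑ C2 ∈ range p, SGL3aux.Fcan m1 m2 n1 n2 p b C1 0 C2
      = ∑ C1 ∈ (range p).erase 0,
          efn ((((m1 - n2 * Zcoef 0 (p - C1) p) * b : ℤ) : ℝ) / p) := by
  have hp0 := hp.pos
  have h0mem : (0:ℕ) ∈ range p := mem_range.mpr hp0
  have hbgcd : Nat.gcd b p = 1 := (SGL3aux.gcd_prime_lt hp hbp).mpr hb0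
  have hpt : ∀ C1 ∈ range p, ∀ C2 ∈ range p, SGL3aux.Fcan m1 m2 n1 n2 p b C1 0 C2
      = (if p ∣ C1 + C2 then
          (if Nat.gcd C2 p = 1 then
            efn ((((m1 - n2 * Zcoef 0 C2 p) * b : ℤ) : ℝ) / p) else 0) else 0) := by
    intro C1 _ C2 _
    unfold SGL3aux.Fcan
    have hg1 : Nat.gcd b (Nat.gcd C1 p) = 1 := SGL3aux.gcd_triple_one hbgcd C1
    by_cases hd : p ∣ C1 + C2
    · by_cases hg2 : Nat.gcd C2 p = 1
      · rw [if_pos ⟨hg1, by simpa [Nat.gcd_zero_left] using hg2, Or.inr rfl, hd⟩,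
          if_pos hd, if_pos hg2]
        congr 1
        push_cast
        ring
      · rw [if_neg, if_pos hd, if_neg hg2]
        rintro ⟨-, hg2', -, -⟩
        exact hg2 (by simpa [Nat.gcd_zero_left] using hg2')
    · rw [if_neg, if_neg hd]
      rintro ⟨-, -, -, hd'⟩
      exact hd hd'
  rw [Finset.sum_congr rfl (fun C1 hC1 => Finset.sum_congr rfl (hpt C1 hC1))]
  rw [← Finset.add_sum_erase _ _ h0mem]
  have hz : (∑ C2 ∈ range p, if p ∣ 0 + C2 then
      (if Nat.gcd C2 p = 1 then
        efn ((((m1 - n2 * Zcoef 0 C2 p) * b : ℤ) : ℝ) / p) else 0) else 0) = 0 := by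
    apply Finset.sum_eq_zero
    intro C2 hC2
    rw [mem_range] at hC2
    by_cases hd : p ∣ 0 + C2
    · have hd' : p ∣ C2 := (Nat.zero_add C2) ▸ hd
      have hC20 : C2 = 0 := Nat.eq_zero_of_dvd_of_lt hd' hC2
      subst hC20
      simp [Nat.gcd_zero_left, hp.one_lt.ne']
    · rw [if_neg hd]
  rw [hz, zero_add]
  refine Finset.sum_congr rfl fun C1 hC1 => ?_
  rw [mem_erase, mem_range] at hC1
  rw [SGL3aux.collapseC2 C1 (Nat.pos_of_ne_zero hC1.1) hC1.2
    (fun C2 => if Nat.gcd C2 p = 1 then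
      efn ((((m1 - n2 * Zcoef 0 C2 p) * b : ℤ) : ℝ) / p) else 0)]
  rw [if_pos ((SGL3aux.gcd_prime_lt hp (by omega)).mpr (by omega))]


lemma SGL3aux.T0b {p : ℕ} (hp : p.Prime) (m1 m2 n1 n2 : ℤ) {b : ℕ}
    (hb0 : b ≠ 0) (hbp : b < p) :
    ∑ C1 ∈ range p, ∑ C2 ∈ range p, SGL3aux.Fcan m1 m2 n1 n2 p 0 C1 b C2
      = ∑ C1 ∈ (range p).erase 0,
          efn ((((m2 - n1 * Zcoef 0 C1 p) * b : ℤ) : ℝ) / p) := by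
  have hp0 := hp.pos
  have h0mem : (0:ℕ) ∈ range p := mem_range.mpr hp0
  have hbgcd : Nat.gcd b p = 1 := (SGL3aux.gcd_prime_lt hp hbp).mpr hb0
  have hpt : ∀ C1 ∈ range p, ∀ C2 ∈ range p, SGL3aux.Fcan m1 m2 n1 n2 p 0 C1 b C2
      = (if Nat.gcd C1 p = 1 then
          (if p ∣ C1 + C2 then
            efn ((((m2 - n1 * Zcoef 0 C1 p) * b : ℤ) : ℝ) / p) else 0) else 0) := by
    intro C1 _ C2 _
    unfold SGL3aux.Fcan
    have hg2 : Nat.gcd b (Nat.gcd C2 p) = 1 := SGL3aux.gcd_triple_one hbgcd C2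
    by_cases hg1 : Nat.gcd C1 p = 1
    · by_cases hd : p ∣ C1 + C2
      · rw [if_pos ⟨by simpa [Nat.gcd_zero_left] using hg1, hg2, Or.inl rfl, hd⟩,
          if_pos hg1, if_pos hd]
        congr 1
        push_cast
        ring
      · rw [if_neg, if_pos hg1, if_neg hd]
        rintro ⟨-, -, -, hd'⟩
        exact hd hd'
    · rw [if_neg, if_neg hg1]
      rintro ⟨hg1', -, -, -⟩
      exact hg1 (by simpa [Nat.gcd_zero_left] using hg1')
  rw [Finset.sum_congr rfl (fun C1 hC1 => Finset.sum_congr rfl (hpt C1 hC1))]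
  rw [← Finset.add_sum_erase _ _ h0mem]
  have hgcd0 : ¬ Nat.gcd 0 p = 1 := by
    rw [Nat.gcd_zero_left]
    exact hp.one_lt.ne'
  have hz : (∑ C2 ∈ range p, if Nat.gcd 0 p = 1 then
      (if p ∣ 0 + C2 then
        efn ((((m2 - n1 * Zcoef 0 0 p) * b : ℤ) : ℝ) / p) else 0) else 0) = 0 := by
    apply Finset.sum_eq_zero
    intro C2 _
    rw [if_neg hgcd0]
  rw [hz, zero_add]
  refine Finset.sum_congr rfl fun C1 hC1 => ?_
  rw [mem_erase, mem_range] at hC1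
  have hg1 : Nat.gcd C1 p = 1 := (SGL3aux.gcd_prime_lt hp hC1.2).mpr hC1.1
  rw [Finset.sum_congr rfl (fun C2 (_ : C2 ∈ range p) => if_pos hg1)]
  rw [SGL3aux.collapseC2 C1 (Nat.pos_of_ne_zero hC1.1) hC1.2
    (fun _ => efn ((((m2 - n1 * Zcoef 0 C1 p) * b : ℤ) : ℝ) / p))]

lemma SGL3aux.rowsum {p : ℕ} (hp : p.Prime) (t : ℕ → ℤ) (u : ZMod p) (hu : u ≠ 0)
    (hiff : ∀ C ∈ (range p).erase 0, ((p:ℤ) ∣ t C ↔ (C : ZMod p) = u)) :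
    ∑ C ∈ (range p).erase 0, ∑ b ∈ (range p).erase 0,
      efn (((t C * b : ℤ) : ℝ) / p) = 1 := by
  haveI : Fact p.Prime := ⟨hp⟩
  haveI : NeZero p := ⟨hp.pos.ne'⟩
  have h0mem : (0:ℕ) ∈ range p := mem_range.mpr hp.pos
  have hinner : ∀ C ∈ (range p).erase 0,
      ∑ b ∈ (range p).erase 0, efn (((t C * b : ℤ) : ℝ) / p)
        = (if (p:ℤ) ∣ t C then (p:ℂ) else 0) - 1 := by
    intro C _
    have hsplit := Finset.add_sum_erase (range p)
      (fun b => efn (((t C * b : ℤ) : ℝ) / p)) h0mem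
    rw [SGL3aux.sum_range_efn p hp.pos (t C)] at hsplit
    have h2 := eq_sub_of_add_eq' hsplit
    rw [h2]
    congr 1
    show efn (((t C * ((0:ℕ) : ℤ) : ℤ) : ℝ) / p) = 1
    norm_num [SGL3aux.efn_zero]
  rw [Finset.sum_congr rfl hinner, Finset.sum_sub_distrib]
  rw [SGL3aux.count_sum u hu (fun C => (p:ℤ) ∣ t C) hiff]
  rw [Finset.sum_const, card_erase_of_mem h0mem, card_range]
  have hc : ((p - 1 : ℕ) : ℂ) = (p:ℂ) - 1 := by
    push_cast [Nat.cast_sub hp.pos]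
    ring
  rw [nsmul_eq_mul, mul_one, hc]
  ring

/-- For a prime `p` not dividing `m₁ m₂ n₁ n₂`, one has `S(m₁,m₂,n₁,n₂;p,p) = p + 1`. -/
theorem stmt0 (p : ℕ) (hp : p.Prime) (m1 m2 n1 n2 : ℤ)
    (h1 : ¬ (p : ℤ) ∣ m1) (h2 : ¬ (p : ℤ) ∣ m2)
    (h3 : ¬ (p : ℤ) ∣ n1) (h4 : ¬ (p : ℤ) ∣ n2) :
    SGL3 m1 m2 n1 n2 p p = (p : ℂ) + 1 := by
  haveI hfact : Fact p.Prime := ⟨hp⟩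
  haveI : NeZero p := ⟨hp.pos.ne'⟩
  have hp0 : 0 < p := hp.pos
  have hp1 : 1 < p := hp.one_lt
  have h0mem : (0:ℕ) ∈ range p := mem_range.mpr hp0
  have hm1 : (m1 : ZMod p) ≠ 0 := by rwa [Ne, ZMod.intCast_zmod_eq_zero_iff_dvd]
  have hm2 : (m2 : ZMod p) ≠ 0 := by rwa [Ne, ZMod.intCast_zmod_eq_zero_iff_dvd]
  have hn1 : (n1 : ZMod p) ≠ 0 := by rwa [Ne, ZMod.intCast_zmod_eq_zero_iff_dvd]
  have hn2 : (n2 : ZMod p) ≠ 0 := by rwa [Ne, ZMod.intCast_zmod_eq_zero_iff_dvd]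
  -- Step 1: rewrite to the canonical summand
  have master : SGL3 m1 m2 n1 n2 p p
      = ∑ B1 ∈ range p, ∑ C1 ∈ range p, ∑ B2 ∈ range p, ∑ C2 ∈ range p,
          SGL3aux.Fcan m1 m2 n1 n2 p B1 C1 B2 C2 := by
    rw [SGL3]
    refine Finset.sum_congr rfl fun B1 hB1 => Finset.sum_congr rfl fun C1 _ =>
      Finset.sum_congr rfl fun B2 hB2 => Finset.sum_congr rfl fun C2 _ => ?_
    rw [mem_range] at hB1 hB2
    unfold SGL3aux.Fcan
    refine if_congr ?_ (SGL3aux.term_eval p hp0 m1 m2 n1 n2 B1 C1 B2 C2) rfl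
    exact and_congr_right fun _ => and_congr_right fun _ =>
      SGL3aux.cond_iff hp hB1 hB2 C1 C2
  rw [master]
  -- Step 2: swap the C1 and B2 sums
  rw [show (∑ B1 ∈ range p, ∑ C1 ∈ range p, ∑ B2 ∈ range p, ∑ C2 ∈ range p,
        SGL3aux.Fcan m1 m2 n1 n2 p B1 C1 B2 C2)
      = ∑ B1 ∈ range p, ∑ B2 ∈ range p, ∑ C1 ∈ range p, ∑ C2 ∈ range p,
        SGL3aux.Fcan m1 m2 n1 n2 p B1 C1 B2 C2 from
    Finset.sum_congr rfl fun B1 _ => Finset.sum_comm]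
  -- Step 3: split off the B1 = 0 and B2 = 0 parts
  have hsplit := SGL3aux.split4 h0mem (fun B1 B2 => ∑ C1 ∈ range p, ∑ C2 ∈ range p,
      SGL3aux.Fcan m1 m2 n1 n2 p B1 C1 B2 C2)
  beta_reduce at hsplit
  rw [hsplit]
  -- the four pieces
  have H1 : ∑ C1 ∈ range p, ∑ C2 ∈ range p, SGL3aux.Fcan m1 m2 n1 n2 p 0 C1 0 C2
      = (p:ℂ) - 1 := SGL3aux.T00 hp m1 m2 n1 n2
  have H4 : ∑ B1 ∈ (range p).erase 0, ∑ B2 ∈ (range p).erase 0,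
      (∑ C1 ∈ range p, ∑ C2 ∈ range p, SGL3aux.Fcan m1 m2 n1 n2 p B1 C1 B2 C2) = 0 := by
    refine Finset.sum_eq_zero fun B1 hB1 => Finset.sum_eq_zero fun B2 hB2 => ?_
    exact SGL3aux.Tbb m1 m2 n1 n2 (mem_erase.mp hB1).1 (mem_erase.mp hB2).1
  have H2 : ∑ B2 ∈ (range p).erase 0,
      (∑ C1 ∈ range p, ∑ C2 ∈ range p, SGL3aux.Fcan m1 m2 n1 n2 p 0 C1 B2 C2) = 1 := by
    rw [Finset.sum_congr rfl (fun b hb => SGL3aux.T0b hp m1 m2 n1 n2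
      (mem_erase.mp hb).1 (mem_range.mp (mem_of_mem_erase hb)))]
    rw [Finset.sum_comm]
    refine SGL3aux.rowsum hp (fun C => m2 - n1 * Zcoef 0 C p)
      ((n1 : ZMod p) * (m2 : ZMod p)⁻¹)
      (mul_ne_zero hn1 (inv_ne_zero hm2)) ?_
    intro C hC
    rw [mem_erase, mem_range] at hC
    exact SGL3aux.dvd_crit hp m2 n1 h2 C hC.1 hC.2
  have H3 : ∑ B1 ∈ (range p).erase 0,
      (∑ C1 ∈ range p, ∑ C2 ∈ range p, SGL3aux.Fcan m1 m2 n1 n2 p B1 C1 0 C2) = 1 := by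
    rw [Finset.sum_congr rfl (fun b hb => SGL3aux.Tb0 hp m1 m2 n1 n2
      (mem_erase.mp hb).1 (mem_range.mp (mem_of_mem_erase hb)))]
    rw [Finset.sum_comm]
    refine SGL3aux.rowsum hp (fun C => m1 - n2 * Zcoef 0 (p - C) p)
      (-((n2 : ZMod p) * (m1 : ZMod p)⁻¹))
      (neg_ne_zero.mpr (mul_ne_zero hn2 (inv_ne_zero hm1))) ?_
    intro C hC
    rw [mem_erase, mem_range] at hC
    rw [SGL3aux.dvd_crit hp m1 n2 h1 (p - C) (by omega) (by omega)]
    have hcast : ((p - C : ℕ) : ZMod p) = -(C : ZMod p) := by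
      push_cast [Nat.cast_sub (le_of_lt hC.2)]
      simp [ZMod.natCast_self]
    rw [hcast, neg_eq_iff_eq_neg]
  rw [H1, H2, H3, H4]
  ring
end

section
/- Let $a, b, c$ be positive integers with $ab \mid c$, $\gcd(a, b) = 1$, and let $\alpha$ be an integer with $\gcd(\alpha, c) = 1$ and $n$ any integer. Write $a' = \prod_{p : v_p(a) = v_p(c)} p^{v_p(c)}$ and $a'' = a/a'$. If $a'' > 1$, then $S(an, b\alpha; c) = 0$. If $a'' = 1$ (i.e. for each prime $p \mid a$, $v_p(a) = v_p(c)$) and additionally $\gcd(a, c/a) = 1$, then $S(an, b\alpha; c) = S(0, 1; a) \cdot S(n, b\alpha \bar{a}; c/a)$, where $\bar{a}$ denotes the inverse of $a$ modulo $c/a$. -/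
open Finset

/-!
Write `K_c(M, N) = ∑_{u ∈ (ℤ/c)ˣ} ψ_c(M u + N u⁻¹)` with `ψ_c` the standard additive character
of `ℤ/c`. For coprime `q, r` the Chinese remainder theorem and `1/(qr) ≡ r̄/q + q̄/r (mod 1)`
give the twisted multiplicativity `K_{qr}(M, N) = K_q(r̄M, r̄N) · K_r(q̄M, q̄N)`. With
`c = a · (c/a)` the first factor is `K_a(0, unit) = K_a(0, 1)` and the second one is
`K_{c/a}(n, bα ā)`.

If `a'' > 1`, some prime `p ∣ a` has `v_p(a) < v_p(c)`, so `p² ∣ c`. Then `x = c/p` satisfies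
`x² = 0` and `x · an = 0`, so the units `1 + t x` rescale the `u`-term of the sum by
`ψ_c(-x bα u⁻¹)^t`, a nontrivial `p`-th root of unity to the power `t`; averaging over `t < p`
kills the sum.
-/

open ZMod

noncomputable def kloosterman (c : ℕ) [NeZero c] (M N : ZMod c) : ℂ :=
  ∑ u : (ZMod c)ˣ, stdAddChar (M * (u : ZMod c) + N * ((u⁻¹ : (ZMod c)ˣ) : ZMod c))

lemma efn_intCast_div (c : ℕ) [NeZero c] (j : ℤ) :
    efn ((j : ℝ) / c) = stdAddChar (j : ZMod c) := by
  rw [stdAddChar_coe, efn]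
  push_cast
  ring_nf

lemma Kl_eq_kloosterman (M N : ℤ) (c : ℕ) [NeZero c] : Kl M N c = kloosterman c M N := by
  rw [Kl, ← sum_filter, kloosterman]
  symm
  refine sum_bij (fun u _ => (u : ZMod c).val) (fun u _ => ?_) (fun u _ v _ h => ?_)
    (fun x hx => ?_) (fun u _ => ?_)
  · simpa only [mem_filter, mem_range] using ⟨val_lt _, val_coe_unit_coprime u⟩
  · exact Units.ext (val_injective c h)
  · rw [mem_filter, mem_range] at hx
    refine ⟨unitOfCoprime x hx.2, mem_univ _, ?_⟩
    simp [val_cast_of_lt hx.1]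
  · rw [efn_intCast_div]
    push_cast
    rw [natCast_zmod_val, natCast_zmod_val, inv_coe_unit]

lemma kloosterman_mul_unit_mul_inv (c : ℕ) [NeZero c] (M N : ZMod c) (v : (ZMod c)ˣ) :
    kloosterman c (M * v) (N * (v⁻¹ : (ZMod c)ˣ)) = kloosterman c M N :=
  Fintype.sum_equiv (Equiv.mulLeft v) _ _ fun u => by
    simp only [Equiv.coe_mulLeft, mul_inv_rev, Units.val_mul]
    ring_nf

lemma kloosterman_zero_left_of_isUnit (c : ℕ) [NeZero c] {N : ZMod c} (hN : IsUnit N) :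
    kloosterman c 0 N = kloosterman c 0 1 := by
  simpa using (kloosterman_mul_unit_mul_inv c 0 N hN.unit).symm

lemma stdAddChar_eq_mul_of_coprime {q r : ℕ} [NeZero q] [NeZero r] (hqr : q.Coprime r)
    (y : ZMod (q * r)) :
    stdAddChar y = stdAddChar ((r : ZMod q)⁻¹ * castHom (dvd_mul_right q r) (ZMod q) y) *
      stdAddChar ((q : ZMod r)⁻¹ * castHom (dvd_mul_left r q) (ZMod r) y) := by
  obtain ⟨g, h, hgh⟩ := Nat.isCoprime_iff_coprime.2 hqr
  have hr : (r : ZMod q)⁻¹ = h := ZMod.inv_eq_of_mul_eq_one _ _ _ <| by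
    simpa [mul_comm] using congrArg (Int.cast : ℤ → ZMod q) hgh
  have hq : (q : ZMod r)⁻¹ = g := ZMod.inv_eq_of_mul_eq_one _ _ _ <| by
    simpa [mul_comm] using congrArg (Int.cast : ℤ → ZMod r) hgh
  obtain ⟨m, rfl⟩ := intCast_surjective y
  rw [hr, hq, map_intCast (castHom _ (ZMod q)), map_intCast (castHom _ (ZMod r)),
    ← Int.cast_mul, ← Int.cast_mul, stdAddChar_coe, stdAddChar_coe, stdAddChar_coe,
    ← Complex.exp_add]
  have hgh' : (g : ℂ) * q + h * r = 1 := by exact_mod_cast hgh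
  have : (q : ℂ) ≠ 0 := Nat.cast_ne_zero.2 (NeZero.ne q)
  have : (r : ℂ) ≠ 0 := Nat.cast_ne_zero.2 (NeZero.ne r)
  congr 1
  push_cast
  field_simp
  linear_combination -(m : ℂ) * hgh'

lemma kloosterman_mul_of_coprime {q r : ℕ} [NeZero q] [NeZero r] (hqr : q.Coprime r)
    (M N : ZMod (q * r)) :
    kloosterman (q * r) M N =
      kloosterman q ((r : ZMod q)⁻¹ * castHom (dvd_mul_right q r) (ZMod q) M)
        ((r : ZMod q)⁻¹ * castHom (dvd_mul_right q r) (ZMod q) N) *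
      kloosterman r ((q : ZMod r)⁻¹ * castHom (dvd_mul_left r q) (ZMod r) M)
        ((q : ZMod r)⁻¹ * castHom (dvd_mul_left r q) (ZMod r) N) := by
  let e : (ZMod (q * r))ˣ ≃* (ZMod q)ˣ × (ZMod r)ˣ :=
    (Units.mapEquiv (chineseRemainder hqr).toMulEquiv).trans MulEquiv.prodUnits
  have he : ∀ u, ((e u).1 : ZMod q) = castHom (dvd_mul_right q r) (ZMod q) u ∧
      ((e u).2 : ZMod r) = castHom (dvd_mul_left r q) (ZMod r) u := fun u =>
    ⟨Prod.fst_zmod_cast (u : ZMod (q * r)), Prod.snd_zmod_cast (u : ZMod (q * r))⟩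
  rw [kloosterman, kloosterman, kloosterman, sum_mul_sum, ← Fintype.sum_prod_type']
  refine Fintype.sum_equiv e.toEquiv _ _ fun u => ?_
  obtain ⟨hu₁, hu₂⟩ := he u
  obtain ⟨hv₁, hv₂⟩ := he u⁻¹
  rw [map_inv, Prod.fst_inv] at hv₁
  rw [map_inv, Prod.snd_inv] at hv₂
  rw [stdAddChar_eq_mul_of_coprime hqr, MulEquiv.toEquiv_eq_coe, MulEquiv.coe_toEquiv]
  simp only [map_add, map_mul, hu₁, hu₂, hv₁, hv₂, mul_add, mul_assoc]

lemma sum_eq_zero_of_mul_left_eq_mul_pow {G : Type*} [Group G] [Fintype G] {f η : G → ℂ}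
    {p : ℕ} (hp : p ≠ 0) (ε : ℕ → G) (hshift : ∀ t u, f (ε t * u) = f u * η u ^ t)
    (hη : ∀ u, η u ≠ 1) (hηp : ∀ u, η u ^ p = 1) :
    ∑ u, f u = 0 := by
  have hsum : ∀ t, ∑ u, f u = ∑ u, f u * η u ^ t := fun t => by
    rw [← sum_congr rfl fun u _ => hshift t u]
    exact (Fintype.sum_equiv (Equiv.mulLeft (ε t)) _ f fun _ => rfl).symm
  have : (p : ℂ) * ∑ u, f u = 0 := by
    rw [← card_range p, ← nsmul_eq_mul, ← sum_const, sum_congr rfl fun t _ => hsum t, sum_comm]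
    refine sum_eq_zero fun u _ => ?_
    rw [← mul_sum, geom_sum_eq (hη u), hηp u, sub_self, zero_div, mul_zero]
  exact (mul_eq_zero.1 this).resolve_left (Nat.cast_ne_zero.2 hp)

lemma castHom_eq_zero_of_natCast_mul_eq_zero {m p c : ℕ} [NeZero c] (hmp : m * p = c)
    {y : ZMod c} (hy : (m : ZMod c) * y = 0) :
    castHom (Dvd.intro_left m hmp) (ZMod p) y = 0 := by
  have hm : 0 < m := Nat.pos_of_ne_zero fun h => NeZero.ne c (by rw [← hmp, h, zero_mul])
  rw [← natCast_zmod_val y, map_natCast, natCast_eq_zero_iff]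
  rw [← natCast_zmod_val y, ← Nat.cast_mul, natCast_eq_zero_iff] at hy
  exact (Nat.mul_dvd_mul_iff_left hm).1 (hmp ▸ hy)

lemma kloosterman_eq_zero_of_sq_dvd {p c : ℕ} [NeZero c] (hp : p.Prime) (hpc : p ^ 2 ∣ c)
    {M N : ZMod c} (hM : (p : ZMod c) ∣ M) (hN : (cast N : ZMod p) ≠ 0) :
    kloosterman c M N = 0 := by
  obtain ⟨k, hk⟩ := hpc
  have hmp : p * k * p = c := by rw [hk]; ring
  set x : ZMod c := ((p * k : ℕ) : ZMod c)
  have hpx : (p : ZMod c) * x = 0 := by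
    rw [← Nat.cast_mul, ← mul_assoc, ← sq, ← hk, natCast_self]
  have hxx : x * x = 0 := by
    rw [show x * x = p * x * k by push_cast [x]; ring, hpx, zero_mul]
  have hxM : x * M = 0 := by
    obtain ⟨m, rfl⟩ := hM
    rw [← mul_assoc, mul_comm x, hpx, zero_mul]
  let ε : ℕ → (ZMod c)ˣ := fun t =>
    ⟨1 + t * x, 1 - t * x, by linear_combination -(t : ZMod c) ^ 2 * hxx,
      by linear_combination -(t : ZMod c) ^ 2 * hxx⟩
  refine sum_eq_zero_of_mul_left_eq_mul_pow hp.ne_zero ε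
    (η := fun u => stdAddChar (-(x * N * ((u⁻¹ : (ZMod c)ˣ) : ZMod c)))) (fun t u => ?_)
    (fun u hu => ?_) (fun u => ?_)
  · simp only [← AddChar.map_nsmul_eq_pow, ← AddChar.map_add_eq_mul, mul_inv_rev,
      Units.val_mul, ε, Units.inv_mk, nsmul_eq_mul]
    congr 1
    linear_combination (t : ZMod c) * u * hxM
  · rw [← (stdAddChar : AddChar (ZMod c) ℂ).map_zero_eq_one, injective_stdAddChar.eq_iff,
      neg_eq_zero, mul_assoc] at hu
    have := castHom_eq_zero_of_natCast_mul_eq_zero hmp hu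
    rw [map_mul, (u⁻¹.isUnit.map _).mul_left_eq_zero, castHom_apply] at this
    exact hN this
  · rw [← AddChar.map_nsmul_eq_pow, nsmul_eq_mul, ← mul_neg, ← mul_assoc, ← mul_assoc, hpx,
      zero_mul, zero_mul, AddChar.map_zero_eq_one]

lemma exists_prime_dvd_factorization_lt {a c : ℕ} (hc : c ≠ 0) (hac : a ∣ c)
    (h : 1 < a / ∏ p ∈ a.primeFactors.filter (fun p => a.factorization p = c.factorization p),
      p ^ c.factorization p) :
    ∃ p, p.Prime ∧ p ∣ a ∧ a.factorization p < c.factorization p := by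
  by_contra! hno
  have ha : a ≠ 0 := ne_zero_of_dvd_ne_zero hc hac
  have hall : ∀ p ∈ a.primeFactors, a.factorization p = c.factorization p := fun p hp =>
    le_antisymm ((Nat.factorization_le_iff_dvd ha hc).2 hac p)
      (hno p (Nat.prime_of_mem_primeFactors hp) (Nat.dvd_of_mem_primeFactors hp))
  rw [filter_true_of_mem hall, prod_congr rfl fun p hp => by rw [← hall p hp],
    ← Nat.prod_primeFactors_pow_factorization ha, Nat.div_self (Nat.pos_of_ne_zero ha)] at h
  exact h.false

lemma Kl_mul_eq_zero_of_sq_dvd {p a b c : ℕ} [NeZero c] (hp : p.Prime) (hpc : p ^ 2 ∣ c)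
    (hpa : p ∣ a) (hpb : ¬ p ∣ b) {α : ℤ} (hαc : IsCoprime α c) (n : ℤ) :
    Kl (a * n) (b * α) c = 0 := by
  have hpc' : p ∣ c := (dvd_pow_self p two_ne_zero).trans hpc
  have hpZ : Prime (p : ℤ) := Nat.prime_iff_prime_int.1 hp
  rw [Kl_eq_kloosterman]
  refine kloosterman_eq_zero_of_sq_dvd hp hpc ?_ ?_
  · rw [Int.cast_mul, Int.cast_natCast]
    exact (Nat.cast_dvd_cast hpa).mul_right _
  · rw [cast_intCast hpc', Ne, intCast_zmod_eq_zero_iff_dvd, hpZ.dvd_mul, not_or,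
      Int.natCast_dvd_natCast]
    exact ⟨hpb, fun hpα =>
      hpZ.not_isUnit (hαc.isUnit_of_dvd' hpα (Int.natCast_dvd_natCast.2 hpc'))⟩

lemma Kl_mul_eq_mul_of_coprime {a b d : ℕ} [NeZero a] [NeZero d] (had : a.Coprime d)
    (hab : a.Coprime b) {α : ℤ} (hαa : IsCoprime α a) (n : ℤ) :
    Kl (a * n) (b * α) (a * d) = Kl 0 1 a * Kl n (b * α * ((a : ZMod d)⁻¹.val : ℤ)) d := by
  have hda : IsUnit (d : ZMod a) := (isUnit_iff_coprime d a).2 had.symm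
  have hbα : IsUnit ((b * α : ℤ) : ZMod a) := (coe_int_isUnit_iff_isCoprime _ a).2 <|
    (Nat.isCoprime_iff_coprime.2 hab).mul_right hαa.symm
  rw [Kl_eq_kloosterman, kloosterman_mul_of_coprime had, Kl_eq_kloosterman, Kl_eq_kloosterman]
  simp only [map_intCast]
  congr 1
  · rw [Int.cast_mul, Int.cast_natCast, natCast_self, zero_mul, mul_zero, Int.cast_zero,
      Int.cast_one]
    exact kloosterman_zero_left_of_isUnit a
      ((IsUnit.of_mul_eq_one _ (inv_mul_of_unit _ hda)).mul hbα)
  · push_cast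
    rw [natCast_zmod_val, ← mul_assoc, inv_mul_of_unit _ ((isUnit_iff_coprime a d).2 had),
      one_mul, mul_comm]

theorem stmt4_general (a b c : ℕ) (hc : 0 < c)
    (hab : a * b ∣ c) (hcop : Nat.Coprime a b)
    (n α : ℤ) (hα : Int.gcd α c = 1)
    (a' a'' : ℕ)
    (ha' : a' = ∏ p ∈ a.primeFactors.filter
        (fun p => a.factorization p = c.factorization p), p ^ c.factorization p)
    (ha'' : a'' = a / a') :
    (1 < a'' → Kl ((a : ℤ) * n) ((b : ℤ) * α) c = 0) ∧
    ((∀ p : ℕ, p.Prime → p ∣ a → a.factorization p = c.factorization p) →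
      Nat.Coprime a (c / a) →
      Kl ((a : ℤ) * n) ((b : ℤ) * α) c =
        Kl 0 1 a * Kl n ((b : ℤ) * α * (((a : ZMod (c / a))⁻¹).val : ℤ)) (c / a)) := by
  have : NeZero c := ⟨hc.ne'⟩
  have hac : a ∣ c := (dvd_mul_right a b).trans hab
  have hαc : IsCoprime α c := Int.isCoprime_iff_gcd_eq_one.2 hα
  refine ⟨fun h1 => ?_, fun _ had => ?_⟩
  · obtain ⟨p, hp, hpa, hlt⟩ := exists_prime_dvd_factorization_lt hc.ne' hac
      (by rwa [ha'', ha'] at h1)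
    have hpc : p ^ 2 ∣ c := (hp.pow_dvd_iff_le_factorization hc.ne').2 <| by
      have := hp.factorization_pos_of_dvd (ne_zero_of_dvd_ne_zero hc.ne' hac) hpa
      omega
    exact Kl_mul_eq_zero_of_sq_dvd hp hpc hpa (hp.coprime_iff_not_dvd.1 (hcop.coprime_dvd_left hpa))
      hαc n
  · obtain ⟨d, rfl⟩ := hac
    have : NeZero a := ⟨left_ne_zero_of_mul hc.ne'⟩
    have : NeZero d := ⟨right_ne_zero_of_mul hc.ne'⟩
    rw [Nat.mul_div_cancel_left d (Nat.pos_of_neZero a)] at had ⊢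
    exact Kl_mul_eq_mul_of_coprime had hcop
      (hαc.of_isCoprime_of_dvd_right (Int.natCast_dvd_natCast.2 (dvd_mul_right a d))) n

/-- Evaluation of `S(an, bα; c)` with `ab ∣ c`, `(a,b)=1`, `(α,c)=1`: vanishing when
`a'' > 1`, and factorization `S(an,bα;c) = S(0,1;a)·S(n, bα·ā; c/a)` when `a'' = 1`
and `(a, c/a) = 1`. -/
theorem stmt4 (a b c : ℕ) (ha : 0 < a) (hb : 0 < b) (hc : 0 < c)
    (hab : a * b ∣ c) (hcop : Nat.Coprime a b)
    (n α : ℤ) (hα : Int.gcd α c = 1)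
    (a' a'' : ℕ)
    (ha' : a' = ∏ p ∈ a.primeFactors.filter
        (fun p => a.factorization p = c.factorization p), p ^ c.factorization p)
    (ha'' : a'' = a / a') :
    (1 < a'' → Kl ((a : ℤ) * n) ((b : ℤ) * α) c = 0) ∧
    ((∀ p : ℕ, p.Prime → p ∣ a → a.factorization p = c.factorization p) →
      Nat.Coprime a (c / a) →
      Kl ((a : ℤ) * n) ((b : ℤ) * α) c =
        Kl 0 1 a * Kl n ((b : ℤ) * α * (((a : ZMod (c / a))⁻¹).val : ℤ)) (c / a)) :=
  stmt4_general a b c hc hab hcop n α hα a' a'' ha' ha''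
end
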